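/- In the setting of the previous statement, assume additionally that K = ker φ is torsion-free, and let S ≤ F be a subgroup with H = φ⁻¹(S). Then H is torsion-free if and only if for every x ∈ F and every j, x⁻¹Sx ∩ φ(I_j) = {1}. -/

import Mathlib

/-- A monoid is torsion-free if no nontrivial elements have finite order
(the definition removed from Mathlib, restored with its old meaning). -/
def Monoid.IsTorsionFree (G : Type*) [Monoid G] : Prop :=
  ∀ g : G, g ≠ 1 → ¬IsOfFinOrder g

/-- Suppose `φ : Γ → F` is surjective onto a finite group with torsion-free kernel `K`,
`I₁,…,I_r` are finite subgroups such that every finite-order element of `Γ` is conjugate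
into some `I_j`, and `S ≤ F` with `H = φ⁻¹(S)`. Then `H` is torsion-free iff for every
`x ∈ F` and every `j`, `x⁻¹Sx ∩ φ(I_j) = {1}` (expressed elementwise). -/
theorem preimage_torsionFree_iff {Γ F : Type*} [Group Γ] [Group F] [Finite F]
    (φ : Γ →* F) (hφ : Function.Surjective φ)
    (r : ℕ) (I : Fin r → Subgroup Γ) (hIfin : ∀ j, Finite (I j))
    (hconj : ∀ g : Γ, g ≠ 1 → IsOfFinOrder g → ∃ j, ∃ x : Γ, x * g * x⁻¹ ∈ I j)
    (hK : Monoid.IsTorsionFree φ.ker)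
    (S : Subgroup F) :
    Monoid.IsTorsionFree (S.comap φ) ↔
      ∀ x : F, ∀ j, ∀ g ∈ I j, x * φ g * x⁻¹ ∈ S → φ g = 1 := by
  constructor
  · intro hH x j g hg hxS
    obtain ⟨y, hy⟩ := hφ x
    have hmem : y * g * y⁻¹ ∈ S.comap φ := by
      simp only [Subgroup.mem_comap, map_mul, map_inv, hy]
      exact hxS
    -- g has finite order since I j is finite
    have hgfin : IsOfFinOrder g := by
      have : IsOfFinOrder (⟨g, hg⟩ : I j) := isOfFinOrder_of_finite _
      exact (Submonoid.isOfFinOrder_coe).mpr this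
    have hcfin : IsOfFinOrder (y * g * y⁻¹) := by
      obtain ⟨n, hn, hgn⟩ := (isOfFinOrder_iff_pow_eq_one).mp hgfin
      exact isOfFinOrder_iff_pow_eq_one.mpr ⟨n, hn, by simp [conj_pow, hgn]⟩
    have hcfin' : IsOfFinOrder (⟨y * g * y⁻¹, hmem⟩ : S.comap φ) :=
      Submonoid.isOfFinOrder_coe.mp hcfin
    by_contra hne
    have hgne : g ≠ 1 := fun h => hne (by simp [h])
    have : (⟨y * g * y⁻¹, hmem⟩ : S.comap φ) ≠ 1 := by
      intro h
      apply hgne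
      have := congrArg Subtype.val h
      simp only at this
      have : y * g * y⁻¹ = 1 := this
      have := congrArg (fun z => y⁻¹ * z * y) this
      simpa [mul_assoc] using this
    exact hH _ this hcfin'
  · intro hcond h hne hfin
    have hγfin : IsOfFinOrder (h : Γ) := (Submonoid.isOfFinOrder_coe).mpr hfin
    have hγne : (h : Γ) ≠ 1 := fun hh => hne (Subtype.ext hh)
    obtain ⟨j, x, hx⟩ := hconj h hγne hγfin
    have hS : (φ x)⁻¹ * φ (x * (h : Γ) * x⁻¹) * ((φ x)⁻¹)⁻¹ ∈ S := by
      have : φ (h : Γ) ∈ S := h.2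
      simpa [map_mul, map_inv, mul_assoc] using this
    have := hcond (φ x)⁻¹ j _ hx hS
    -- φ (x * h * x⁻¹) = 1, so φ h = 1, so h ∈ ker φ
    have hker : (h : Γ) ∈ φ.ker := by
      rw [MonoidHom.mem_ker]
      have : φ x * φ (h : Γ) * (φ x)⁻¹ = 1 := by
        simpa [map_mul, map_inv, mul_assoc] using this
      have := congrArg (fun z => (φ x)⁻¹ * z * φ x) this
      simpa [mul_assoc] using this
    have hkfin : IsOfFinOrder (⟨(h : Γ), hker⟩ : φ.ker) :=
      Submonoid.isOfFinOrder_coe.mp hγfin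
    have hkne : (⟨(h : Γ), hker⟩ : φ.ker) ≠ 1 := fun hh =>
      hγne (congrArg Subtype.val hh)
    exact hK _ hkne hkfin
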